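/- Let m, n be coprime positive integers, γ an (m,n)-Dyck path and γ* the associated rugged (m+n,n)-Dyck path. Then h(γ) = h(γ*) - Σ_{p ∈ V(γ*)} k(p), where h(δ) = |H(δ)| counts pairs of a horizontal step and a later vertical step both met by a common line parallel to the diagonal, V(γ*) is the set of outer vertices of γ* other than the one farthest from the diagonal, and k(p) is the number of horizontal steps of γ* (other than the two touching p) intersected by the line of slope n/(m+n) through p. -/

import Mathlib

/-!
Measure points by their level `n x - m y`, so that the lines parallel to the diagonal are the
level sets. Passing from `γ` to `γ*` (slope `n / (m + n)`) keeps the level of every original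
point, and the horizontal step inserted after a vertical step `j` sweeps `[ℓ - n, ℓ]`, where `ℓ`
is the level after `j`. So `h(γ*) - h(γ)` counts pairs whose window became wider or that involve
an inserted step, while the line through an outer vertex of `γ*` meets original horizontal
steps, which are up-crossings of its level, and inserted ones. Up- and down-crossings of a level
balance along any stretch of path starting and ending above it, and coprimality makes the
vertex levels pairwise distinct; with these the two counts agree pair by pair.
-/
open scoped Classical
open Finset

/-- A lattice path is encoded as a list of steps: `false` = horizontal step `(1,0)`,
`true` = vertical step `(0,1)`.  `IsDyck m n w` says `w` is an `(m,n)`-Dyck path: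
it has `m` horizontal and `n` vertical steps and every intermediate lattice point
`(x,y)` satisfies `n*x ≤ m*y` (the path stays weakly above the diagonal `y=(n/m)x`). -/
def IsDyck (m n : ℕ) (w : List Bool) : Prop :=
  w.count false = m ∧ w.count true = n ∧
    ∀ p ∈ w.inits, n * p.count false ≤ m * p.count true

/-- `x`-coordinate of the point of the path reached after the first `i` steps. -/
def ptX (w : List Bool) (i : ℕ) : ℤ := ((w.take i).count false : ℤ)

/-- `y`-coordinate of the point of the path reached after the first `i` steps. -/
def ptY (w : List Bool) (i : ℕ) : ℤ := ((w.take i).count true : ℤ)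

/-- `O(γ)`: pairs `(i,j)` of a horizontal step `i` and a vertical step `j`
appearing later in the path. -/
def Opairs (w : List Bool) : Finset (ℕ × ℕ) :=
  (Finset.range w.length ×ˢ Finset.range w.length).filter
    (fun ij => ij.1 < ij.2 ∧ w[ij.1]? = some false ∧ w[ij.2]? = some true)

/-- The set of (bottom-left corners of) complete unit lattice squares lying between the
path and the diagonal `y = (n/m)x`: the square `[x,x+1]×[y,y+1]` lies weakly above the
diagonal and strictly below the path. -/
noncomputable def areaSet (m n : ℕ) (w : List Bool) : Finset (ℕ × ℕ) :=
  ((Finset.range m) ×ˢ (Finset.range n)).filter (fun xy =>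
    n * (xy.1 + 1) ≤ m * xy.2 ∧
    ∃ i < w.length, w[i]? = some false ∧
      (w.take (i+1)).count false = xy.1 + 1 ∧ xy.2 + 1 ≤ (w.take (i+1)).count true)

/-- `area(γ)`: the number of complete unit lattice squares between the path and the
diagonal. -/
noncomputable def area (m n : ℕ) (w : List Bool) : ℕ := (areaSet m n w).card

/-- Some line of slope `n/m` (i.e. `{(x,y) | n*x - m*y = c}`) meets both the closed
horizontal step segment `i` and the closed vertical step segment `j`. -/
def MeetsBoth (m n : ℕ) (w : List Bool) (i j : ℕ) : Prop :=
  ∃ c : ℝ,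
    (∃ x : ℝ, (ptX w i : ℝ) ≤ x ∧ x ≤ (ptX w i : ℝ) + 1 ∧
      (n : ℝ) * x - (m : ℝ) * (ptY w i : ℝ) = c) ∧
    (∃ y : ℝ, (ptY w j : ℝ) ≤ y ∧ y ≤ (ptY w j : ℝ) + 1 ∧
      (n : ℝ) * (ptX w j : ℝ) - (m : ℝ) * y = c)

/-- Condition (1A): the line of slope `n/m` through the left endpoint `(a-1,b)` of the
horizontal step `i` meets the closed vertical step segment `j`. -/
def Cond1A (m n : ℕ) (w : List Bool) (i j : ℕ) : Prop :=
  ∃ y : ℝ, (ptY w j : ℝ) ≤ y ∧ y ≤ (ptY w j : ℝ) + 1 ∧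
    (n : ℝ) * ((ptX w j : ℝ) - (ptX w i : ℝ)) = (m : ℝ) * (y - (ptY w i : ℝ))

/-- Condition (2A): the line of slope `n/m` through the top endpoint `(a',b'+1)` of the
vertical step `j` meets the closed horizontal step segment `i`. -/
def Cond2A (m n : ℕ) (w : List Bool) (i j : ℕ) : Prop :=
  ∃ x : ℝ, (ptX w i : ℝ) ≤ x ∧ x ≤ (ptX w i : ℝ) + 1 ∧
    (n : ℝ) * (x - (ptX w j : ℝ)) = (m : ℝ) * ((ptY w i : ℝ) - ((ptY w j : ℝ) + 1))

/-- `H(γ)`: pairs in `O(γ)` admitting a common transversal line parallel to the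
diagonal. -/
noncomputable def Hpairs (m n : ℕ) (w : List Bool) : Finset (ℕ × ℕ) :=
  (Opairs w).filter (fun ij => MeetsBoth m n w ij.1 ij.2)

/-- `H₁(γ)`: pairs in `O(γ)` satisfying condition (1A). -/
noncomputable def H1pairs (m n : ℕ) (w : List Bool) : Finset (ℕ × ℕ) :=
  (Opairs w).filter (fun ij => Cond1A m n w ij.1 ij.2)

/-- `H₂(γ)`: pairs in `O(γ)` satisfying condition (2A). -/
noncomputable def H2pairs (m n : ℕ) (w : List Bool) : Finset (ℕ × ℕ) :=
  (Opairs w).filter (fun ij => Cond2A m n w ij.1 ij.2)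

/-- The line of slope `n/m` through the point `(px,py)` meets the closed segment of the
horizontal step `i`. -/
def lineHitsH (m n : ℕ) (w : List Bool) (px py : ℤ) (i : ℕ) : Prop :=
  w[i]? = some false ∧
    ∃ x : ℝ, (ptX w i : ℝ) ≤ x ∧ x ≤ (ptX w i : ℝ) + 1 ∧
      (n : ℝ) * (x - (px : ℝ)) = (m : ℝ) * ((ptY w i : ℝ) - (py : ℝ))

/-- The line of slope `n/m` through the point `(px,py)` meets the closed segment of the
vertical step `j`. -/
def lineHitsV (m n : ℕ) (w : List Bool) (px py : ℤ) (j : ℕ) : Prop :=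
  w[j]? = some true ∧
    ∃ y : ℝ, (ptY w j : ℝ) ≤ y ∧ y ≤ (ptY w j : ℝ) + 1 ∧
      (n : ℝ) * ((ptX w j : ℝ) - (px : ℝ)) = (m : ℝ) * (y - (py : ℝ))

/-- Outer vertices of the path, encoded by the index `j` of a vertical step that is
immediately followed by a horizontal step; the vertex itself is the point
`(ptX w (j+1), ptY w (j+1))`. -/
def outerIdx (w : List Bool) : Finset ℕ :=
  (Finset.range w.length).filter
    (fun j => w[j]? = some true ∧ w[j+1]? = some false)

/-- The perpendicular distance from the diagonal of the outer vertex indexed by `j`,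
measured by `m*y - n*x` (proportional to the true distance). -/
def diagDist (m n : ℕ) (w : List Bool) (j : ℕ) : ℤ :=
  (m : ℤ) * ptY w (j+1) - (n : ℤ) * ptX w (j+1)

/-- `V(γ)`: outer vertices other than one farthest from the diagonal. -/
def Vset (m n : ℕ) (w : List Bool) : Finset ℕ :=
  (outerIdx w).filter (fun j => ∃ j' ∈ outerIdx w, diagDist m n w j < diagDist m n w j')

/-- `k(p)`: the number of horizontal steps of the path, other than the horizontal step
starting at the outer vertex `p` (indexed by `j`), met by the line of slope `n/m`
through `p`. -/
noncomputable def kH (m n : ℕ) (w : List Bool) (j : ℕ) : ℕ :=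
  ((Finset.range w.length).filter
    (fun i => i ≠ j + 1 ∧ lineHitsH m n w (ptX w (j+1)) (ptY w (j+1)) i)).card

/-- The number of vertical steps of the path, other than the vertical step ending at the
outer vertex `p` (indexed by `j`), met by the line of slope `n/m` through `p`. -/
noncomputable def kV (m n : ℕ) (w : List Bool) (j : ℕ) : ℕ :=
  ((Finset.range w.length).filter
    (fun i => i ≠ j ∧ lineHitsV m n w (ptX w (j+1)) (ptY w (j+1)) i)).card

/-- `k₁(p)`: the number of vertical steps occurring after the outer vertex `p`
(indexed by `j`) met by the line of slope `n/m` through `p`. -/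
noncomputable def k1 (m n : ℕ) (w : List Bool) (j : ℕ) : ℕ :=
  ((Finset.range w.length).filter
    (fun i => j < i ∧ lineHitsV m n w (ptX w (j+1)) (ptY w (j+1)) i)).card

/-- `k₂(p)`: the number of horizontal steps occurring before the outer vertex `p`
(indexed by `j`) met by the line of slope `n/m` through `p`. -/
noncomputable def k2 (m n : ℕ) (w : List Bool) (j : ℕ) : ℕ :=
  ((Finset.range w.length).filter
    (fun i => i ≤ j ∧ lineHitsH m n w (ptX w (j+1)) (ptY w (j+1)) i)).card

/-- The insertion map `γ ↦ γ*`: insert one horizontal step immediately after each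
vertical step. -/
def star : List Bool → List Bool
  | [] => []
  | true :: w => true :: false :: star w
  | false :: w => false :: star w

/-- The index in `γ*` of the step corresponding to the step of index `i` in `γ`. -/
def starIdx (w : List Bool) (i : ℕ) : ℕ := i + (w.take i).count true

/-- A Dyck path is rugged if every vertical step is immediately followed by a
horizontal step. -/
def Rugged (w : List Bool) : Prop :=
  ∀ i, w[i]? = some true → w[i+1]? = some false

section Level

variable {m n : ℕ} {w : List Bool}

lemma count_take_succ (w : List Bool) (i : ℕ) (b : Bool) :
    (w.take (i + 1)).count b = (w.take i).count b + if w[i]? = some b then 1 else 0 := by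
  rw [List.take_add_one, List.count_append]
  rcases w[i]? with _ | c
  · simp
  · cases b <;> cases c <;> simp

def level (m n : ℕ) (w : List Bool) (t : ℕ) : ℤ := n * ptX w t - m * ptY w t

lemma level_zero : level m n w 0 = 0 := by simp [level, ptX, ptY]

lemma level_succ (t : ℕ) :
    level m n w (t + 1) = level m n w t + (if w[t]? = some false then (n : ℤ) else 0)
      - (if w[t]? = some true then (m : ℤ) else 0) := by
  simp only [level, ptX, ptY, count_take_succ]
  split_ifs <;> push_cast <;> ring

lemma level_succ_of_false {t : ℕ} (h : w[t]? = some false) :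
    level m n w (t + 1) = level m n w t + n := by
  simp [level_succ, h]

lemma level_succ_of_true {t : ℕ} (h : w[t]? = some true) :
    level m n w (t + 1) = level m n w t - m := by
  simp [level_succ, h]

lemma ptX_nonneg (w : List Bool) (t : ℕ) : 0 ≤ ptX w t := Int.natCast_nonneg _

lemma ptY_nonneg (w : List Bool) (t : ℕ) : 0 ≤ ptY w t := Int.natCast_nonneg _

lemma ptX_add_ptY {t : ℕ} (ht : t ≤ w.length) : ptX w t + ptY w t = t := by
  have := List.count_false_add_count_true (w.take t)
  rw [List.length_take, min_eq_left ht] at this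
  simp only [ptX, ptY]
  exact_mod_cast this

namespace IsDyck

variable (hw : IsDyck m n w)
include hw

lemma ptX_le (t : ℕ) : ptX w t ≤ m := by
  unfold ptX
  have := (List.take_prefix t w).sublist.count_le false
  rw [hw.1] at this
  exact_mod_cast this

lemma ptY_le (t : ℕ) : ptY w t ≤ n := by
  unfold ptY
  have := (List.take_prefix t w).sublist.count_le true
  rw [hw.2.1] at this
  exact_mod_cast this

lemma level_nonpos (t : ℕ) : level m n w t ≤ 0 := by
  have hprefix := hw.2.2 (w.take t) (List.mem_inits _ _ |>.2 (List.take_prefix t w))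
  simp only [level, ptX, ptY]
  have : (n : ℤ) * (w.take t).count false ≤ m * (w.take t).count true := by
    exact_mod_cast hprefix
  linarith

lemma level_length : level m n w w.length = 0 := by
  simp [level, ptX, ptY, hw.1, hw.2.1, mul_comm]

/-- Two lattice points of the `m × n` rectangle on a common line of slope `n / m` are equal
or are its two corners `(0,0)` and `(m,n)`; only the point after `0` steps is the origin. -/
lemma level_injOn (hm : 0 < m) (hmn : Nat.Coprime m n) :
    Set.InjOn (level m n w) (Set.Icc 1 w.length) := by
  rintro s ⟨hs1, hsL⟩ t ⟨ht1, htL⟩ hst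
  have hline : (n : ℤ) * (ptX w s - ptX w t) = m * (ptY w s - ptY w t) := by
    simp only [level] at hst; linarith
  obtain ⟨k, hk⟩ : (m : ℤ) ∣ ptX w s - ptX w t :=
    (Nat.isCoprime_iff_coprime.2 hmn).dvd_of_dvd_mul_right ⟨ptY w s - ptY w t, by linarith⟩
  have hy : ptY w s - ptY w t = n * k :=
    mul_left_cancel₀ (by positivity : (m : ℤ) ≠ 0) (by rw [← hline, hk]; ring)
  have hs := ptX_add_ptY hsL
  have ht := ptX_add_ptY htL
  have := hw.ptX_le s; have := hw.ptX_le t; have := hw.ptY_le s; have := hw.ptY_le t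
  have := ptX_nonneg w s; have := ptX_nonneg w t; have := ptY_nonneg w s; have := ptY_nonneg w t
  have hm' : (0 : ℤ) < m := by exact_mod_cast hm
  rcases lt_trichotomy k 0 with hk0 | rfl | hk0
  · nlinarith
  · omega
  · nlinarith

end IsDyck

end Level

section Geometry

variable {m n : ℕ} {w : List Bool}

lemma cast_level (t : ℕ) :
    (level m n w t : ℝ) = n * (ptX w t : ℝ) - m * (ptY w t : ℝ) := by
  push_cast [level]; ring

/-- The horizontal step `i` sweeps the levels `[level i, level i + n]` and the vertical step
`j` the levels `[level j - m, level j]`; a common line of slope `n / m` is a common level. -/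
lemma meetsBoth_iff (hm : 0 < m) (hn : 0 < n) (i j : ℕ) :
    MeetsBoth m n w i j ↔
      level m n w i ≤ level m n w j ∧ level m n w j ≤ level m n w i + m + n := by
  have hm' : (0 : ℝ) < m := by exact_mod_cast hm
  have hn' : (0 : ℝ) < n := by exact_mod_cast hn
  rw [← Int.cast_le (R := ℝ), ← Int.cast_le (R := ℝ)]
  push_cast [cast_level]
  constructor
  · rintro ⟨c, ⟨x, hx1, hx2, rfl⟩, ⟨y, hy1, hy2, hxy⟩⟩
    constructor <;> nlinarith
  · rintro ⟨h1, h2⟩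
    obtain ⟨c, hc₁, hc₂, hc₃, hc₄⟩ : ∃ c : ℝ, n * ptX w i - m * ptY w i ≤ c ∧
        n * ptX w j - m * ptY w j - m ≤ c ∧ c ≤ n * ptX w i - m * ptY w i + n ∧
        c ≤ n * ptX w j - m * ptY w j :=
      ⟨_, le_max_left _ _, le_max_right _ _, max_le (by linarith) (by linarith),
        max_le h1 (by linarith)⟩
    refine ⟨c, ⟨(c + m * ptY w i) / n, ?_, ?_, ?_⟩, ⟨(n * ptX w j - c) / m, ?_, ?_, ?_⟩⟩
    · rw [le_div_iff₀ hn']; linarith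
    · rw [div_le_iff₀ hn']; linarith
    · field_simp; ring
    · rw [le_div_iff₀ hm']; linarith
    · rw [div_le_iff₀ hm']; linarith
    · field_simp; ring

lemma lineHitsH_iff (hn : 0 < n) (px py : ℤ) (i : ℕ) :
    lineHitsH m n w px py i ↔ w[i]? = some false ∧
      level m n w i ≤ n * px - m * py ∧ n * px - m * py ≤ level m n w i + n := by
  have hn' : (0 : ℝ) < n := by exact_mod_cast hn
  refine and_congr_right fun _ => ?_
  rw [← Int.cast_le (R := ℝ), ← Int.cast_le (R := ℝ)]
  push_cast [cast_level]
  constructor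
  · rintro ⟨x, hx1, hx2, hx⟩
    constructor <;> nlinarith
  · rintro ⟨h1, h2⟩
    refine ⟨(n * px - m * py + m * ptY w i) / n, ?_, ?_, ?_⟩
    · rw [le_div_iff₀ hn']; linarith
    · rw [div_le_iff₀ hn']; linarith
    · field_simp; ring

end Geometry

section Steps

variable {m n : ℕ} {w : List Bool}

def horizSteps (w : List Bool) : Finset ℕ := {i ∈ range w.length | w[i]? = some false}

def vertSteps (w : List Bool) : Finset ℕ := {j ∈ range w.length | w[j]? = some true}

@[simp] lemma mem_horizSteps {i : ℕ} : i ∈ horizSteps w ↔ w[i]? = some false := by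
  simpa [horizSteps] using fun h => (List.getElem?_eq_some_iff.1 h).1

@[simp] lemma mem_vertSteps {j : ℕ} : j ∈ vertSteps w ↔ w[j]? = some true := by
  simpa [vertSteps] using fun h => (List.getElem?_eq_some_iff.1 h).1

lemma card_Hpairs (hm : 0 < m) (hn : 0 < n) (w : List Bool) :
    #(Hpairs m n w) = ∑ j ∈ vertSteps w, #{i ∈ horizSteps w | i < j ∧
      level m n w i ≤ level m n w j ∧ level m n w j ≤ level m n w i + m + n} := by
  rw [Hpairs, Opairs, filter_filter, card_filter, sum_product_right, vertSteps, sum_filter]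
  refine sum_congr rfl fun j _ => ?_
  rw [card_filter, horizSteps, sum_filter]
  split_ifs with hj
  · refine sum_congr rfl fun i _ => ?_
    by_cases hi : w[i]? = some false <;> simp [meetsBoth_iff hm hn, hi, hj]
  · simp [hj]

end Steps

section Star

variable {m n : ℕ} {w : List Bool}

lemma count_true_star (w : List Bool) : (star w).count true = w.count true := by
  induction w with
  | nil => rfl
  | cons b v ih => cases b <;> simp [_root_.star, ih]

lemma count_false_star (w : List Bool) :
    (star w).count false = w.count false + w.count true := by
  induction w with
  | nil => rfl
  | cons b v ih => cases b <;> simp only [_root_.star, List.count_cons, ih] <;> grind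

lemma starIdx_cons_succ (b : Bool) (v : List Bool) (i : ℕ) :
    starIdx (b :: v) (i + 1) = starIdx v i + 1 + if b then 1 else 0 := by
  cases b <;> simp only [starIdx, List.take_succ_cons, List.count_cons] <;> grind

lemma starIdx_succ (w : List Bool) (i : ℕ) :
    starIdx w (i + 1) = starIdx w i + 1 + if w[i]? = some true then 1 else 0 := by
  simp only [starIdx, count_take_succ]
  omega

lemma starIdx_strictMono (w : List Bool) : StrictMono (starIdx w) :=
  strictMono_nat_of_lt_succ fun i => by rw [starIdx_succ]; omega

lemma starIdx_succ_of_true {j : ℕ} (hj : w[j]? = some true) :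
    starIdx w (j + 1) = starIdx w j + 2 := by
  rw [starIdx_succ, if_pos hj]

lemma starIdx_add_one_lt_iff {i j : ℕ} (hi : w[i]? = some true) :
    starIdx w i + 1 < starIdx w j ↔ i < j := by
  constructor
  · intro h
    by_contra! hji
    have := (starIdx_strictMono w).monotone hji
    omega
  · intro h
    have := (starIdx_strictMono w).monotone (Nat.succ_le_of_lt h)
    rw [starIdx_succ_of_true hi] at this
    omega

lemma starIdx_ne_starIdx_add_one (i : ℕ) {j : ℕ} (hj : w[j]? = some true) :
    starIdx w i ≠ starIdx w j + 1 := by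
  rcases le_or_gt i j with hij | hij
  · have := (starIdx_strictMono w).monotone hij
    omega
  · have := (starIdx_add_one_lt_iff (j := i) hj).2 hij
    omega

lemma getElem?_star_starIdx (w : List Bool) (i : ℕ) : (star w)[starIdx w i]? = w[i]? := by
  induction w generalizing i with
  | nil => simp [_root_.star, starIdx]
  | cons b v ih =>
    cases i with
    | zero => cases b <;> simp [_root_.star, starIdx]
    | succ i => cases b <;> simp [_root_.star, starIdx_cons_succ, ih]

lemma getElem?_star_starIdx_add_one {j : ℕ} (hj : w[j]? = some true) :
    (star w)[starIdx w j + 1]? = some false := by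
  induction w generalizing j with
  | nil => simp at hj
  | cons b v ih =>
    cases j with
    | zero =>
      obtain rfl : b = true := by simpa using hj
      rfl
    | succ j => cases b <;> simp_all [_root_.star, starIdx_cons_succ]

lemma take_star_starIdx (w : List Bool) (i : ℕ) :
    (star w).take (starIdx w i) = star (w.take i) := by
  induction w generalizing i with
  | nil => simp [_root_.star]
  | cons b v ih =>
    cases i with
    | zero => simp [starIdx, _root_.star]
    | succ i => cases b <;> simp [_root_.star, starIdx_cons_succ, ih]

lemma level_star (i : ℕ) : level (m + n) n (star w) (starIdx w i) = level m n w i := by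
  simp only [level, ptX, ptY, take_star_starIdx, count_false_star, count_true_star]
  push_cast; ring

lemma level_star_add_one {j : ℕ} (hj : w[j]? = some true) :
    level (m + n) n (star w) (starIdx w j + 1) = level m n w (j + 1) - n := by
  rw [level_succ_of_true (by rwa [getElem?_star_starIdx]), level_star, level_succ_of_true hj]
  push_cast; ring

lemma exists_starIdx_of_lt_length {t : ℕ} (ht : t < (star w).length) :
    (∃ i, t = starIdx w i) ∨ ∃ j, w[j]? = some true ∧ t = starIdx w j + 1 := by
  induction w generalizing t with
  | nil => simp [_root_.star] at ht
  | cons b v ih =>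
    rcases t with _ | t
    · exact Or.inl ⟨0, rfl⟩
    cases b
    · rcases ih (by simpa [_root_.star] using ht) with ⟨i, rfl⟩ | ⟨j, hj, rfl⟩
      · exact Or.inl ⟨i + 1, by simp [starIdx_cons_succ]⟩
      · exact Or.inr ⟨j + 1, by simpa using hj, by simp [starIdx_cons_succ]⟩
    · rcases t with _ | t
      · exact Or.inr ⟨0, rfl, rfl⟩
      rcases ih (by simpa [_root_.star] using ht) with ⟨i, rfl⟩ | ⟨j, hj, rfl⟩
      · exact Or.inl ⟨i + 1, by simp [starIdx_cons_succ]⟩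
      · exact Or.inr ⟨j + 1, by simpa using hj, by simp [starIdx_cons_succ]⟩

def starEmb (w : List Bool) : ℕ ↪ ℕ := ⟨starIdx w, (starIdx_strictMono w).injective⟩

@[simp] lemma starEmb_apply (i : ℕ) : starEmb w i = starIdx w i := rfl

lemma vertSteps_star : vertSteps (star w) = (vertSteps w).map (starEmb w) := by
  ext t
  simp only [mem_vertSteps, mem_map, starEmb_apply]
  constructor
  · intro ht
    rcases exists_starIdx_of_lt_length (List.getElem?_eq_some_iff.1 ht).1 with
      ⟨i, rfl⟩ | ⟨j, hj, rfl⟩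
    · exact ⟨i, by rwa [getElem?_star_starIdx] at ht, rfl⟩
    · simp [getElem?_star_starIdx_add_one hj] at ht
  · rintro ⟨i, hi, rfl⟩
    rwa [getElem?_star_starIdx]

lemma horizSteps_star : horizSteps (star w) = (horizSteps w).map (starEmb w) ∪
    (vertSteps w).map ((starEmb w).trans (addRightEmbedding 1)) := by
  ext t
  simp only [mem_union, mem_horizSteps, mem_vertSteps, mem_map, Function.Embedding.trans_apply,
    starEmb_apply, addRightEmbedding_apply]
  constructor
  · intro ht
    rcases exists_starIdx_of_lt_length (List.getElem?_eq_some_iff.1 ht).1 with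
      ⟨i, rfl⟩ | ⟨j, hj, rfl⟩
    · exact Or.inl ⟨i, by rwa [getElem?_star_starIdx] at ht, rfl⟩
    · exact Or.inr ⟨j, hj, rfl⟩
  · rintro (⟨i, hi, rfl⟩ | ⟨j, hj, rfl⟩)
    · rwa [getElem?_star_starIdx]
    · exact getElem?_star_starIdx_add_one hj

lemma disjoint_map_starEmb : Disjoint ((horizSteps w).map (starEmb w))
    ((vertSteps w).map ((starEmb w).trans (addRightEmbedding 1))) := by
  simp only [disjoint_left, mem_map, mem_vertSteps, Function.Embedding.trans_apply,
    starEmb_apply, addRightEmbedding_apply]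
  rintro _ ⟨i, -, rfl⟩ ⟨j, hj, h⟩
  exact starIdx_ne_starIdx_add_one i hj h.symm

lemma rugged_star (w : List Bool) : Rugged (star w) := by
  intro t ht
  obtain ⟨j, hj, rfl⟩ := mem_map.1 (vertSteps_star ▸ mem_vertSteps.2 ht)
  exact getElem?_star_starIdx_add_one (mem_vertSteps.1 hj)

lemma card_filter_horizSteps_star (p : ℕ → Prop) [DecidablePred p] :
    #{t ∈ horizSteps (star w) | p t} =
      #{i ∈ horizSteps w | p (starIdx w i)} + #{j ∈ vertSteps w | p (starIdx w j + 1)} := by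
  rw [horizSteps_star, filter_union, card_union_of_disjoint
    (disjoint_filter_filter disjoint_map_starEmb), filter_map, filter_map, card_map, card_map]
  rfl

lemma sum_vertSteps_star {M : Type*} [AddCommMonoid M] (f : ℕ → M) :
    ∑ t ∈ vertSteps (star w), f t = ∑ j ∈ vertSteps w, f (starIdx w j) := by
  rw [vertSteps_star, sum_map]
  rfl

end Star

section Crossings

variable {m n : ℕ} {w : List Bool}

def upCrossings (m n : ℕ) (w : List Bool) (c : ℤ) (t : ℕ) : ℕ :=
  #{s ∈ range t | w[s]? = some false ∧ level m n w s < c ∧ c ≤ level m n w s + n}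

def downCrossings (m n : ℕ) (w : List Bool) (c : ℤ) (t : ℕ) : ℕ :=
  #{s ∈ range t | w[s]? = some true ∧ level m n w (s + 1) < c ∧ c ≤ level m n w (s + 1) + m}

lemma card_filter_range_succ (p : ℕ → Prop) [DecidablePred p] (t : ℕ) :
    #{s ∈ range (t + 1) | p s} = #{s ∈ range t | p s} + if p t then 1 else 0 := by
  simp only [card_filter, sum_range_succ]

lemma upCrossings_add_ite (c : ℤ) (t : ℕ) :
    upCrossings m n w c t + (if c ≤ level m n w 0 then 1 else 0) =
      downCrossings m n w c t + (if c ≤ level m n w t then 1 else 0) := by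
  induction t with
  | zero => simp [upCrossings, downCrossings]
  | succ t ih =>
    rw [upCrossings, downCrossings, card_filter_range_succ, card_filter_range_succ,
      ← upCrossings, ← downCrossings, level_succ]
    rcases h : w[t]? with _ | _ | _ <;>
      simp only [reduceCtorEq, Option.some.injEq, Bool.false_eq_true, Bool.true_eq_false,
        false_and, true_and, if_false, if_true] <;>
      split_ifs at ih ⊢ <;> omega

lemma upCrossings_eq_card_horizSteps (c : ℤ) (t : ℕ) : upCrossings m n w c t =
    #{s ∈ horizSteps w | s < t ∧ level m n w s < c ∧ c ≤ level m n w s + n} := by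
  rw [upCrossings]
  congr 1
  ext s
  simp only [mem_filter, mem_range, mem_horizSteps]
  tauto

lemma downCrossings_eq_card_vertSteps (c : ℤ) (t : ℕ) : downCrossings m n w c t =
    #{s ∈ vertSteps w | s < t ∧ level m n w (s + 1) < c ∧ c ≤ level m n w (s + 1) + m} := by
  rw [downCrossings]
  congr 1
  ext s
  simp only [mem_filter, mem_range, mem_vertSteps]
  tauto

lemma downCrossings_length {c : ℤ} {j : ℕ} (hc : c ≤ level m n w (j + 1)) :
    downCrossings m n w c w.length = downCrossings m n w c j + #{i ∈ vertSteps w | j < i ∧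
      level m n w (i + 1) < c ∧ c ≤ level m n w (i + 1) + m} := by
  rw [downCrossings_eq_card_vertSteps, downCrossings_eq_card_vertSteps, card_filter, card_filter,
    card_filter, ← sum_add_distrib]
  refine sum_congr rfl fun s hs => ?_
  have hsL := (List.getElem?_eq_some_iff.1 (mem_vertSteps.1 hs)).1
  obtain rfl | hsj := eq_or_ne s j
  · simp [not_lt.2 hc]
  · split_ifs <;> omega

lemma upCrossings_eq_downCrossings {c : ℤ} {t : ℕ} (hc : c ≤ 0) (ht : c ≤ level m n w t) :
    upCrossings m n w c t = downCrossings m n w c t := by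
  simpa [level_zero, hc, ht] using upCrossings_add_ite (m := m) (n := n) (w := w) c t

end Crossings

/-- For `j < i`, the window `[b j - p - q, b j + q]` for `b i` splits at `b j - q` and `b j` into
the ranges counted on the right, the upper one with `i` and `j` exchanged. -/
lemma sum_card_window {s : Finset ℕ} {b : ℕ → ℤ} (hb : Set.InjOn b s) (p q : ℕ) :
    ∑ j ∈ s, #{i ∈ s | i < j ∧ b i - p - q ≤ b j ∧ b j ≤ b i + q} =
      ∑ j ∈ s, #{i ∈ s | j < i ∧ b i < b j - q ∧ b j - q ≤ b i + p} +
      ∑ j ∈ s, #{i ∈ s | i ≠ j ∧ b j - q ≤ b i ∧ b i ≤ b j} := by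
  have hpair : ∀ j ∈ s, ∀ i ∈ s,
      (if j < i ∧ b j - p - q ≤ b i ∧ b i ≤ b j + q then 1 else 0) =
        (if j < i ∧ b i < b j - q ∧ b j - q ≤ b i + p then 1 else 0) +
        (if j < i ∧ b j - q ≤ b i ∧ b i ≤ b j then 1 else 0) +
        (if j < i ∧ b i - q ≤ b j ∧ b j ≤ b i then 1 else 0) := by
    intro j hj i hi
    have : j < i → b i ≠ b j := fun hji h => hji.ne' (hb hi hj h)
    split_ifs <;> omega
  have hne : ∀ j ∈ s, ∀ i ∈ s,
      (if i ≠ j ∧ b j - q ≤ b i ∧ b i ≤ b j then 1 else 0) =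
        (if j < i ∧ b j - q ≤ b i ∧ b i ≤ b j then 1 else 0) +
        (if i < j ∧ b j - q ≤ b i ∧ b i ≤ b j then 1 else 0) := by
    intro j _ i _
    split_ifs <;> omega
  simp only [card_filter]
  rw [sum_comm, sum_congr rfl fun j hj => sum_congr rfl (hpair j hj),
    sum_congr rfl fun j hj => sum_congr rfl (hne j hj)]
  simp only [sum_add_distrib]
  rw [sum_comm (f := fun j i => if i < j ∧ b j - q ≤ b i ∧ b i ≤ b j then 1 else 0)]
  ring

section StarCounts

variable {m n : ℕ} {w : List Bool}

/-- In `γ*` the window of levels of a pair with an original horizontal step is wider by `n`;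
the new pairs it admits are up-crossings of the level of the next outer vertex. The last sum
counts the pairs with an inserted horizontal step. -/
lemma card_Hpairs_star (hm : 0 < m) (hn : 0 < n) (w : List Bool) :
    #(Hpairs (m + n) n (star w)) = #(Hpairs m n w) +
      ∑ j ∈ vertSteps w, upCrossings m n w (level m n w (j + 1) - n) j +
      ∑ j ∈ vertSteps w, #{i ∈ vertSteps w | i < j ∧
        level m n w (i + 1) - m - n ≤ level m n w (j + 1) ∧
        level m n w (j + 1) ≤ level m n w (i + 1) + n} := by
  rw [card_Hpairs (by omega) hn, card_Hpairs hm hn, sum_vertSteps_star, ← sum_add_distrib,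
    ← sum_add_distrib]
  refine sum_congr rfl fun j hj => ?_
  rw [mem_vertSteps] at hj
  rw [card_filter_horizSteps_star]
  simp only [(starIdx_strictMono w).lt_iff_lt, level_star]
  rw [upCrossings_eq_card_horizSteps, card_filter, card_filter, card_filter, card_filter,
    card_filter, ← sum_add_distrib]
  congr 1
  · refine sum_congr rfl fun i _ => ?_
    rw [level_succ_of_true hj]
    push_cast
    split_ifs <;> omega
  · refine sum_congr rfl fun i hi => ?_
    rw [mem_vertSteps] at hi
    simp only [starIdx_add_one_lt_iff hi, level_star_add_one hi, level_succ_of_true hj]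
    push_cast
    split_ifs <;> omega

lemma outerIdx_eq_vertSteps (h : Rugged w) : outerIdx w = vertSteps w := by
  ext j
  simp only [outerIdx, vertSteps, mem_filter]
  exact ⟨fun ⟨hl, hj, _⟩ => ⟨hl, hj⟩, fun ⟨hl, hj⟩ => ⟨hl, hj, h j hj⟩⟩

lemma diagDist_eq_neg_level (j : ℕ) : diagDist m n w j = -level m n w (j + 1) := by
  rw [diagDist, level]; ring

lemma Vset_star : Vset (m + n) n (star w) = ({j ∈ vertSteps w |
    ∃ j' ∈ vertSteps w, level m n w (j' + 1) < level m n w (j + 1)}).map (starEmb w) := by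
  rw [Vset, outerIdx_eq_vertSteps (rugged_star w), vertSteps_star, filter_map]
  refine congrArg _ (filter_congr fun j hj => ?_)
  simp only [Function.comp_apply, starEmb_apply, mem_map, diagDist_eq_neg_level]
  constructor
  · rintro ⟨_, ⟨j', hj', rfl⟩, h⟩
    rw [level_star_add_one (mem_vertSteps.1 hj), level_star_add_one (mem_vertSteps.1 hj')] at h
    exact ⟨j', hj', by omega⟩
  · rintro ⟨j', hj', h⟩
    refine ⟨_, ⟨j', hj', rfl⟩, ?_⟩
    rw [level_star_add_one (mem_vertSteps.1 hj), level_star_add_one (mem_vertSteps.1 hj')]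
    omega

lemma kH_eq_card_horizSteps (hn : 0 < n) (p : ℕ) : kH m n w p =
    #{t ∈ horizSteps w | t ≠ p + 1 ∧
      level m n w t ≤ level m n w (p + 1) ∧ level m n w (p + 1) ≤ level m n w t + n} := by
  rw [kH, horizSteps, filter_filter]
  refine congrArg _ (filter_congr fun t _ => ?_)
  rw [lineHitsH_iff hn]
  simp only [level]
  tauto

lemma kH_star (hn : 0 < n) {j : ℕ} (hj : w[j]? = some true) :
    kH (m + n) n (star w) (starIdx w j) =
      #{i ∈ horizSteps w | level m n w i ≤ level m n w (j + 1) - n ∧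
        level m n w (j + 1) - n ≤ level m n w i + n} +
      #{i ∈ vertSteps w | i ≠ j ∧ level m n w (j + 1) - n ≤ level m n w (i + 1) ∧
        level m n w (i + 1) ≤ level m n w (j + 1)} := by
  rw [kH_eq_card_horizSteps hn, card_filter_horizSteps_star, level_star_add_one hj]
  congr 1
  · refine congrArg _ (filter_congr fun i _ => ?_)
    simp only [level_star, ne_eq, starIdx_ne_starIdx_add_one i hj, not_false_eq_true, true_and]
  · refine congrArg _ (filter_congr fun i hi => ?_)
    rw [level_star_add_one (mem_vertSteps.1 hi), ne_eq, add_left_inj,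
      (starIdx_strictMono w).injective.eq_iff]
    constructor <;> rintro ⟨h1, h2, h3⟩ <;> exact ⟨h1, by omega, by omega⟩

end StarCounts

namespace IsDyck

variable {m n : ℕ} {w : List Bool} (hw : IsDyck m n w) (hm : 0 < m) (hmn : Nat.Coprime m n)
include hw hm hmn

lemma level_succ_injOn_vertSteps : Set.InjOn (fun i => level m n w (i + 1)) (vertSteps w) := by
  intro i hi j hj h
  have hL : ∀ {k}, k ∈ vertSteps w → k + 1 ∈ Set.Icc 1 w.length := fun hk =>
    ⟨by omega, (List.getElem?_eq_some_iff.1 (mem_vertSteps.1 hk)).1⟩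
  simpa using hw.level_injOn hm hmn (hL hi) (hL hj) h

/-- By injectivity no horizontal step starts at the level `level (j + 1) - n`, so the steps met
there are up-crossings, which the closed path balances by down-crossings. -/
lemma card_hits_eq_downCrossings {j : ℕ} (hj : w[j]? = some true) :
    #{i ∈ horizSteps w | level m n w i ≤ level m n w (j + 1) - n ∧
        level m n w (j + 1) - n ≤ level m n w i + n} =
      downCrossings m n w (level m n w (j + 1) - n) w.length := by
  rw [← upCrossings_eq_downCrossings (by linarith [hw.level_nonpos (j + 1)])
    (by rw [hw.level_length]; linarith [hw.level_nonpos (j + 1)]), upCrossings_eq_card_horizSteps]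
  refine congrArg _ (filter_congr fun i hi => ?_)
  have hiL := (List.getElem?_eq_some_iff.1 (mem_horizSteps.1 hi)).1
  have hne : level m n w i ≠ level m n w (j + 1) - n := by
    intro h
    have hij : i + 1 = j + 1 := hw.level_injOn hm hmn ⟨by omega, hiL⟩
      ⟨by omega, (List.getElem?_eq_some_iff.1 hj).1⟩
      (by rw [level_succ_of_false (mem_horizSteps.1 hi)]; omega)
    rw [show i = j by omega, mem_horizSteps, hj] at hi
    simp at hi
  constructor
  · rintro ⟨h1, h2⟩
    exact ⟨hiL, lt_of_le_of_ne h1 hne, h2⟩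
  · rintro ⟨-, h1, h2⟩
    exact ⟨h1.le, h2⟩

/-- The farthest outer vertex would contribute `0`, so the sum may run over all vertical steps. -/
lemma sum_kH_Vset_star (hn : 0 < n) :
    ∑ p ∈ Vset (m + n) n (star w), kH (m + n) n (star w) p =
      ∑ j ∈ vertSteps w, (downCrossings m n w (level m n w (j + 1) - n) w.length +
        #{i ∈ vertSteps w | i ≠ j ∧ level m n w (j + 1) - n ≤ level m n w (i + 1) ∧
          level m n w (i + 1) ≤ level m n w (j + 1)}) := by
  rw [Vset_star, sum_map]
  simp only [starEmb_apply]
  rw [sum_congr rfl fun j hj => by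
    rw [kH_star hn (mem_vertSteps.1 (mem_filter.1 hj).1),
      hw.card_hits_eq_downCrossings hm hmn (mem_vertSteps.1 (mem_filter.1 hj).1)]]
  refine sum_filter_of_ne fun j hj hne => ?_
  by_contra! hfar
  refine hne (Nat.add_eq_zero_iff.2 ⟨card_eq_zero.2 (filter_eq_empty_iff.2 ?_),
    card_eq_zero.2 (filter_eq_empty_iff.2 ?_)⟩)
  · rintro i - ⟨hi, h1, -⟩
    have := hfar i (mem_vertSteps.2 hi)
    omega
  · rintro i hi ⟨hij, -, h2⟩
    exact hij (hw.level_succ_injOn_vertSteps hm hmn hi hj (le_antisymm h2 (hfar i hi)))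

/-- Before the vertical step `j` the path starts and ends above the level `level (j + 1) - n`,
so there the down-crossings balance the up-crossings. -/
lemma sum_downCrossings_add_card :
    ∑ j ∈ vertSteps w, (downCrossings m n w (level m n w (j + 1) - n) w.length +
        #{i ∈ vertSteps w | i ≠ j ∧ level m n w (j + 1) - n ≤ level m n w (i + 1) ∧
          level m n w (i + 1) ≤ level m n w (j + 1)}) =
      ∑ j ∈ vertSteps w, upCrossings m n w (level m n w (j + 1) - n) j +
      ∑ j ∈ vertSteps w, #{i ∈ vertSteps w | i < j ∧
        level m n w (i + 1) - m - n ≤ level m n w (j + 1) ∧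
        level m n w (j + 1) ≤ level m n w (i + 1) + n} := by
  have hdown : ∀ j ∈ vertSteps w, downCrossings m n w (level m n w (j + 1) - n) w.length =
      upCrossings m n w (level m n w (j + 1) - n) j + #{i ∈ vertSteps w | j < i ∧
        level m n w (i + 1) < level m n w (j + 1) - n ∧
        level m n w (j + 1) - n ≤ level m n w (i + 1) + m} := by
    intro j hj
    rw [downCrossings_length (j := j) (by omega), upCrossings_eq_downCrossings
      (by linarith [hw.level_nonpos (j + 1)])
      (by rw [level_succ_of_true (mem_vertSteps.1 hj)] at *; omega)]
  rw [sum_congr rfl fun j hj => by rw [hdown j hj], sum_add_distrib, sum_add_distrib,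
    sum_card_window (b := fun i => level m n w (i + 1)) (hw.level_succ_injOn_vertSteps hm hmn)]
  ring

end IsDyck

/-- `h(γ) = h(γ*) - Σ_{p ∈ V(γ*)} k(p)`. -/
theorem statement12 (m n : ℕ) (hm : 0 < m) (hn : 0 < n) (h : Nat.Coprime m n)
    (w : List Bool) (hw : IsDyck m n w) :
    ((Hpairs m n w).card : ℤ) =
      ((Hpairs (m + n) n (star w)).card : ℤ) -
        ∑ p ∈ Vset (m + n) n (star w), (kH (m + n) n (star w) p : ℤ) := by
  rw [card_Hpairs_star hm hn w, ← Nat.cast_sum, hw.sum_kH_Vset_star hm h hn,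
    hw.sum_downCrossings_add_card hm h]
  push_cast
  ring
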